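/- arXiv:math/0209407 — 4 statements merged into one kernel-verified Lean document; each statement's English description precedes it below -/
import Mathlib

section
/- For p = 2, a function f : ℤ_2 → ℤ_2 is compatible and induces a transitive permutation modulo 2^k for all k ≥ 1 if and only if f can be represented in the form f(x) = 1 + x + 2·(v(x+1) - v(x)), where v : ℤ_2 → ℤ_2 is some compatible (1-Lipschitz) function. -/
/-!
Write `f x = x + 1 + 2 * w x`, so that `f^[2^k] x - x - 2^k = 2 * ∑_{j < 2^k} w (f^[j] x)`.
Given transitivity modulo `2^k`, transitivity modulo `2^(k+1)` amounts to
`f^[2^k] x ≡ x + 2^k (mod 2^(k+1))`, i.e. to `2^k` dividing the sum of `w` over an orbit of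
length `2^k`. For compatible `w` such an orbit sum agrees modulo `2^k` with the sum over any
complete residue system, e.g. `0, …, 2^k - 1`; for `w = Δv` the latter telescopes to
`v (2^k) - v 0 ≡ 0`, and induction on `k` gives transitivity. Conversely, transitivity makes the
partial sums `n ↦ ∑_{i < n} w i` 2-adically uniformly continuous on `ℕ`, and their continuous
extension `v` satisfies `Δv = w`. Compatibility of `w` comes from `f` being compatible and
injective modulo every `2^(k+1)`.
-/

/-- A function on the `p`-adic integers is *compatible* if it is 1-Lipschitz. -/
def IsCompatible {p : ℕ} [Fact p.Prime] (f : ℤ_[p] → ℤ_[p]) : Prop :=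
  ∀ x y : ℤ_[p], ‖f x - f y‖ ≤ ‖x - y‖

/-- `f` is transitive modulo `p^k`: it induces a single-cycle permutation of `ZMod (p^k)`. -/
def TransitiveMod {p : ℕ} [Fact p.Prime] (f : ℤ_[p] → ℤ_[p]) (k : ℕ) : Prop :=
  ∃ g : ZMod (p ^ k) → ZMod (p ^ k),
    (∀ x : ℤ_[p], g (PadicInt.toZModPow k x) = PadicInt.toZModPow k (f x)) ∧
    ∀ a b : ZMod (p ^ k), ∃ m : ℕ, g^[m] a = b

open PadicInt Function

variable {p : ℕ} [Fact p.Prime]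

lemma PadicInt.norm_le_pow_iff_pow_dvd (x : ℤ_[p]) (k : ℕ) :
    ‖x‖ ≤ (p : ℝ) ^ (-(k : ℤ)) ↔ (p : ℤ_[p]) ^ k ∣ x := by
  rw [norm_le_pow_iff_mem_span_pow, Ideal.mem_span_singleton]

lemma PadicInt.toZModPow_eq_iff_pow_dvd {k : ℕ} {x y : ℤ_[p]} :
    toZModPow k x = toZModPow k y ↔ (p : ℤ_[p]) ^ k ∣ x - y := by
  rw [← sub_eq_zero, ← map_sub, ← RingHom.mem_ker, ker_toZModPow, Ideal.mem_span_singleton]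

lemma PadicInt.pow_dvd_natCast_sub_iff_modEq {k a b : ℕ} :
    (p : ℤ_[p]) ^ k ∣ (a : ℤ_[p]) - b ↔ a ≡ b [MOD p ^ k] := by
  rw [← toZModPow_eq_iff_pow_dvd, map_natCast, map_natCast, ZMod.natCast_eq_natCast_iff]

lemma PadicInt.pow_dvd_sub_natCast_val_toZModPow (k : ℕ) (x : ℤ_[p]) :
    (p : ℤ_[p]) ^ k ∣ x - ((toZModPow k x).val : ℤ_[p]) := by
  rw [← toZModPow_eq_iff_pow_dvd, map_natCast, ZMod.natCast_zmod_val]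

lemma PadicInt.isClosed_setOf_pow_dvd (k : ℕ) :
    IsClosed {x : ℤ_[p] | (p : ℤ_[p]) ^ k ∣ x} := by
  simp_rw [← norm_le_pow_iff_pow_dvd, ← mem_closedBall_zero_iff]
  exact Metric.isClosed_closedBall

lemma PadicInt.bijective_toZModPow_natCast_add (k n : ℕ) :
    Bijective fun j : Fin (p ^ k) => toZModPow k ((n + j : ℕ) : ℤ_[p]) := by
  rw [Fintype.bijective_iff_injective_and_card, ZMod.card, Fintype.card_fin]
  refine ⟨fun i j hij => Fin.ext ?_, rfl⟩
  have hij' : ((i : ℕ) : ZMod (p ^ k)) = (j : ℕ) := by simpa using hij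
  simpa [ZMod.val_natCast_of_lt i.isLt, ZMod.val_natCast_of_lt j.isLt]
    using congrArg ZMod.val hij'

lemma isCompatible_iff_pow_dvd {f : ℤ_[p] → ℤ_[p]} :
    IsCompatible f ↔
      ∀ (k : ℕ) (x y : ℤ_[p]), (p : ℤ_[p]) ^ k ∣ x - y → (p : ℤ_[p]) ^ k ∣ f x - f y := by
  refine ⟨fun hf k x y h => ?_, fun hf x y => ?_⟩
  · rw [← norm_le_pow_iff_pow_dvd] at h ⊢
    exact (hf x y).trans h
  · rcases eq_or_ne x y with rfl | hxy
    · simp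
    have hnorm := norm_eq_zpow_neg_valuation (sub_ne_zero.mpr hxy)
    rw [hnorm, norm_le_pow_iff_pow_dvd]
    exact hf _ x y ((norm_le_pow_iff_pow_dvd _ _).mp hnorm.le)

namespace IsCompatible

variable {f g : ℤ_[p] → ℤ_[p]}

lemma pow_dvd_sub (hf : IsCompatible f) {k : ℕ} {x y : ℤ_[p]}
    (h : (p : ℤ_[p]) ^ k ∣ x - y) : (p : ℤ_[p]) ^ k ∣ f x - f y :=
  isCompatible_iff_pow_dvd.mp hf k x y h

lemma continuous (hf : IsCompatible f) : Continuous f :=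
  (LipschitzWith.of_dist_le' (K := 1) fun x y => by
    simpa [dist_eq_norm] using hf x y).continuous

lemma fwdDiff (hf : IsCompatible f) (h : ℤ_[p]) : IsCompatible (fwdDiff h f) :=
  isCompatible_iff_pow_dvd.mpr fun k x y hxy => by
    have hshift := hf.pow_dvd_sub (show (p : ℤ_[p]) ^ k ∣ x + h - (y + h) by simpa using hxy)
    simpa only [_root_.fwdDiff, sub_sub_sub_comm] using dvd_sub hshift (hf.pow_dvd_sub hxy)

lemma eq_of_natCast_eq (hf : IsCompatible f) (hg : IsCompatible g)
    (h : ∀ n : ℕ, f n = g n) : f = g :=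
  denseRange_natCast.equalizer hf.continuous hg.continuous (funext h)

lemma pow_dvd_sum_range_sub_sum_range (hf : IsCompatible f) {k : ℕ} {s t : ℕ → ℤ_[p]}
    (hs : Bijective fun j : Fin (p ^ k) => toZModPow k (s j))
    (ht : Bijective fun j : Fin (p ^ k) => toZModPow k (t j)) :
    (p : ℤ_[p]) ^ k ∣
      ∑ j ∈ Finset.range (p ^ k), f (s j) - ∑ j ∈ Finset.range (p ^ k), f (t j) := by
  let σ := (Equiv.ofBijective _ hs).trans (Equiv.ofBijective _ ht).symm
  have hσ (j : Fin (p ^ k)) : toZModPow k (t (σ j)) = toZModPow k (s j) :=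
    (Equiv.ofBijective _ ht).apply_symm_apply _
  rw [← Fin.sum_univ_eq_sum_range (fun j => f (s j)),
    ← Fin.sum_univ_eq_sum_range (fun j => f (t j)),
    ← σ.sum_comp (fun j : Fin (p ^ k) => f (t j)), ← Finset.sum_sub_distrib]
  exact Finset.dvd_sum fun j _ => hf.pow_dvd_sub (toZModPow_eq_iff_pow_dvd.mp (hσ j).symm)

end IsCompatible

lemma dvd_sub_of_modEq_of_forall_dvd_add_sub {R : Type*} [CommRing R] {Q : ℕ → R} {N : ℕ}
    {d : R} (hQ : ∀ n, d ∣ Q (n + N) - Q n) {a b : ℕ} (hab : a ≡ b [MOD N]) :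
    d ∣ Q a - Q b := by
  have hper (n t : ℕ) : d ∣ Q (n + N * t) - Q n := by
    induction t with
    | zero => simp
    | succ t ih =>
      rw [Nat.mul_succ, ← add_assoc, ← sub_add_sub_cancel _ (Q (n + N * t))]
      exact dvd_add (hQ _) ih
  have ha := hper (a % N) (a / N)
  have hb := hper (b % N) (b / N)
  rw [Nat.mod_add_div] at ha hb
  rw [hab] at ha
  simpa using dvd_sub ha hb

lemma exists_isCompatible_natCast_eq {P : ℕ → ℤ_[p]}
    (hP : ∀ k a b, a ≡ b [MOD p ^ k] → (p : ℤ_[p]) ^ k ∣ P a - P b) :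
    ∃ v : ℤ_[p] → ℤ_[p], IsCompatible v ∧ ∀ n : ℕ, v n = P n := by
  have hp : p.Prime := Fact.out
  let u (x : ℤ_[p]) (l : ℕ) : ℤ_[p] := P (toZModPow l x).val
  have hu {k l l' : ℕ} (hl : k ≤ l) (hl' : k ≤ l') {x y : ℤ_[p]}
      (hxy : (p : ℤ_[p]) ^ k ∣ x - y) : (p : ℤ_[p]) ^ k ∣ u x l - u y l' := by
    refine hP k _ _ (pow_dvd_natCast_sub_iff_modEq.mp ?_)
    have hx := (pow_dvd_pow _ hl).trans (pow_dvd_sub_natCast_val_toZModPow l x)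
    have hy := (pow_dvd_pow _ hl').trans (pow_dvd_sub_natCast_val_toZModPow l' y)
    convert dvd_add (dvd_sub hxy hx) hy using 1
    ring
  have hcauchy (x : ℤ_[p]) : CauchySeq (u x) := by
    have hp1 : (1 : ℝ) < p := mod_cast hp.one_lt
    refine cauchySeq_of_le_geometric (p : ℝ)⁻¹ 1 (inv_lt_one_of_one_lt₀ hp1) fun l => ?_
    rw [dist_eq_norm, one_mul, inv_pow, ← zpow_natCast, ← zpow_neg, norm_le_pow_iff_pow_dvd]
    exact hu le_rfl l.le_succ (by simp)
  let v (x : ℤ_[p]) : ℤ_[p] := Filter.limUnder Filter.atTop (u x)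
  have hlim (x : ℤ_[p]) : Filter.Tendsto (u x) Filter.atTop (nhds (v x)) :=
    (hcauchy x).tendsto_limUnder
  refine ⟨v, isCompatible_iff_pow_dvd.mpr fun k x y hxy => ?_, fun n => ?_⟩
  · refine (isClosed_setOf_pow_dvd k).mem_of_tendsto ((hlim x).sub (hlim y)) ?_
    filter_upwards [Filter.eventually_ge_atTop k] with l hl using hu hl hl hxy
  · refine tendsto_nhds_unique (hlim n) (tendsto_const_nhds.congr' ?_)
    filter_upwards [Filter.eventually_ge_atTop n] with l hl
    have hlt : n < p ^ l := (Nat.lt_pow_self hp.one_lt).trans_le (Nat.pow_le_pow_right hp.pos hl)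
    simp [u, ZMod.val_natCast_of_lt hlt]

lemma exists_isCompatible_fwdDiff_eq {w : ℤ_[p] → ℤ_[p]} (hw : IsCompatible w)
    (hsum : ∀ k n, (p : ℤ_[p]) ^ k ∣ ∑ j ∈ Finset.range (p ^ k), w ((n + j : ℕ) : ℤ_[p])) :
    ∃ v : ℤ_[p] → ℤ_[p], IsCompatible v ∧ fwdDiff 1 v = w := by
  let P (n : ℕ) : ℤ_[p] := ∑ i ∈ Finset.range n, w i
  have hblock (k n : ℕ) : (p : ℤ_[p]) ^ k ∣ P (n + p ^ k) - P n := by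
    simp only [P, Finset.sum_range_add, add_sub_cancel_left]
    exact hsum k n
  obtain ⟨v, hv, hvP⟩ := exists_isCompatible_natCast_eq
    fun k _ _ => dvd_sub_of_modEq_of_forall_dvd_add_sub (Q := P) (hblock k)
  refine ⟨v, hv, (hv.fwdDiff 1).eq_of_natCast_eq hw fun n => ?_⟩
  rw [fwdDiff, ← Nat.cast_succ, hvP, hvP]
  simp only [P, Finset.sum_range_succ, add_sub_cancel_left]

section FiniteDynamics

variable {α : Type*} {g : α → α}

lemma surjective_of_forall_exists_iterate (h : ∀ a b, ∃ m, g^[m] a = b) : Surjective g := by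
  intro b
  obtain ⟨m, hm⟩ := h (g b) b
  exact ⟨g^[m] b, by rw [← iterate_succ_apply' g m b, iterate_succ_apply, hm]⟩

variable [Fintype α]

lemma minimalPeriod_eq_card_of_forall_exists_iterate (h : ∀ a b, ∃ m, g^[m] a = b) (a : α) :
    minimalPeriod g a = Fintype.card α := by
  have hper : a ∈ periodicPts g := by
    obtain ⟨m, hm⟩ := h (g a) a
    exact mk_mem_periodicPts m.succ_pos (by rwa [IsPeriodicPt, IsFixedPt, iterate_succ_apply])
  have hpos := minimalPeriod_pos_of_mem_periodicPts hper
  have hsurj : Surjective fun j : Fin (minimalPeriod g a) => g^[j] a := fun b => by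
    obtain ⟨m, hm⟩ := h a b
    exact ⟨⟨m % _, Nat.mod_lt _ hpos⟩, by simp [iterate_mod_minimalPeriod_eq, hm]⟩
  exact minimalPeriod_le_card.antisymm (by simpa using Fintype.card_le_of_surjective _ hsurj)

lemma bijective_iterate_of_forall_exists_iterate (h : ∀ a b, ∃ m, g^[m] a = b) (a : α) :
    Bijective fun j : Fin (Fintype.card α) => g^[j] a := by
  rw [Fintype.bijective_iff_injective_and_card, Fintype.card_fin]
  refine ⟨fun i j hij => Fin.ext ?_, rfl⟩
  have hinj := iterate_injOn_Iio_minimalPeriod (f := g) (x := a)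
  rw [minimalPeriod_eq_card_of_forall_exists_iterate h] at hinj
  exact hinj i.isLt j.isLt hij

end FiniteDynamics

lemma PadicInt.toZModPow_iterate {f : ℤ_[p] → ℤ_[p]} {k : ℕ} {g : ZMod (p ^ k) → ZMod (p ^ k)}
    (hg : ∀ x, g (toZModPow k x) = toZModPow k (f x)) (m : ℕ) (x : ℤ_[p]) :
    toZModPow k (f^[m] x) = g^[m] (toZModPow k x) :=
  Semiconj.iterate_right (fun x => (hg x).symm) m x

lemma transitiveMod_zero (f : ℤ_[p] → ℤ_[p]) : TransitiveMod f 0 :=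
  ⟨id, fun _ => Subsingleton.elim (α := ZMod 1) _ _,
    fun _ _ => ⟨0, Subsingleton.elim (α := ZMod 1) _ _⟩⟩

lemma transitiveMod_of_exists_pow_dvd_iterate_sub {f : ℤ_[p] → ℤ_[p]} {k : ℕ}
    (hf : IsCompatible f) (h : ∀ x y, ∃ m, (p : ℤ_[p]) ^ k ∣ f^[m] x - y) :
    TransitiveMod f k := by
  have hsec (a : ZMod (p ^ k)) : toZModPow k (a.val : ℤ_[p]) = a := by
    rw [map_natCast, ZMod.natCast_zmod_val]
  have hg (x : ℤ_[p]) : toZModPow k (f ((toZModPow k x).val : ℤ_[p])) = toZModPow k (f x) :=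
    toZModPow_eq_iff_pow_dvd.mpr (hf.pow_dvd_sub (toZModPow_eq_iff_pow_dvd.mp (hsec _)))
  refine ⟨fun a => toZModPow k (f (a.val : ℤ_[p])), hg, fun a b => ?_⟩
  obtain ⟨m, hm⟩ := h (a.val : ℤ_[p]) (b.val : ℤ_[p])
  refine ⟨m, ?_⟩
  rw [← hsec a, ← hsec b, ← toZModPow_iterate hg, toZModPow_eq_iff_pow_dvd.mpr hm]

namespace TransitiveMod

variable {f : ℤ_[p] → ℤ_[p]} {k : ℕ}

lemma exists_pow_dvd_iterate_sub (h : TransitiveMod f k) (x y : ℤ_[p]) :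
    ∃ m, (p : ℤ_[p]) ^ k ∣ f^[m] x - y := by
  obtain ⟨g, hg, htr⟩ := h
  obtain ⟨m, hm⟩ := htr (toZModPow k x) (toZModPow k y)
  refine ⟨m, toZModPow_eq_iff_pow_dvd.mp ?_⟩
  rwa [toZModPow_iterate hg]

lemma pow_dvd_iterate_pow_sub (h : TransitiveMod f k) (x : ℤ_[p]) :
    (p : ℤ_[p]) ^ k ∣ f^[p ^ k] x - x := by
  obtain ⟨g, hg, htr⟩ := h
  have hper := iterate_minimalPeriod (f := g) (x := toZModPow k x)
  rw [minimalPeriod_eq_card_of_forall_exists_iterate htr, ZMod.card] at hper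
  rwa [← toZModPow_eq_iff_pow_dvd, toZModPow_iterate hg]

lemma not_pow_dvd_iterate_sub (h : TransitiveMod f k) {n : ℕ} (hn : n ≠ 0) (hnk : n < p ^ k)
    (x : ℤ_[p]) : ¬ (p : ℤ_[p]) ^ k ∣ f^[n] x - x := by
  obtain ⟨g, hg, htr⟩ := h
  rw [← toZModPow_eq_iff_pow_dvd, toZModPow_iterate hg]
  refine not_isPeriodicPt_of_pos_of_lt_minimalPeriod hn ?_
  rwa [minimalPeriod_eq_card_of_forall_exists_iterate htr, ZMod.card]

lemma pow_dvd_sub_of_pow_dvd_apply_sub (h : TransitiveMod f k) {x y : ℤ_[p]}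
    (hxy : (p : ℤ_[p]) ^ k ∣ f x - f y) : (p : ℤ_[p]) ^ k ∣ x - y := by
  obtain ⟨g, hg, htr⟩ := h
  rw [← toZModPow_eq_iff_pow_dvd, ← hg, ← hg] at hxy
  exact toZModPow_eq_iff_pow_dvd.mp
    ((Finite.injective_iff_surjective.mpr (surjective_of_forall_exists_iterate htr)) hxy)

lemma bijective_toZModPow_iterate (h : TransitiveMod f k) (x : ℤ_[p]) :
    Bijective fun j : Fin (p ^ k) => toZModPow k (f^[j] x) := by
  obtain ⟨g, hg, htr⟩ := h
  have hbij := bijective_iterate_of_forall_exists_iterate htr (toZModPow k x)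
  rw [ZMod.card] at hbij
  simpa only [toZModPow_iterate hg] using hbij

lemma pow_dvd_sum_range_fwdDiff_iterate {v : ℤ_[p] → ℤ_[p]} (hv : IsCompatible v)
    (h : TransitiveMod f k) (x : ℤ_[p]) :
    (p : ℤ_[p]) ^ k ∣ ∑ j ∈ Finset.range (p ^ k), fwdDiff 1 v (f^[j] x) := by
  have horbit := (hv.fwdDiff 1).pow_dvd_sum_range_sub_sum_range (s := fun j => f^[j] x)
    (t := fun j => ((0 + j : ℕ) : ℤ_[p])) (h.bijective_toZModPow_iterate x)
    (bijective_toZModPow_natCast_add k 0)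
  have htelescope : ∑ j ∈ Finset.range (p ^ k), fwdDiff 1 v ((0 + j : ℕ) : ℤ_[p]) =
      v ((p ^ k : ℕ) : ℤ_[p]) - v (0 : ℕ) := by
    simp only [zero_add, fwdDiff, ← Nat.cast_succ]
    exact Finset.sum_range_sub (fun j => v j) _
  have hends : (p : ℤ_[p]) ^ k ∣ v ((p ^ k : ℕ) : ℤ_[p]) - v (0 : ℕ) :=
    hv.pow_dvd_sub (by simp)
  rw [htelescope] at horbit
  simpa only [sub_add_cancel] using dvd_add horbit hends

end TransitiveMod

section TwoAdic

variable {f w : ℤ_[2] → ℤ_[2]}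

lemma two_pow_succ_dvd_sub_two_pow {k : ℕ} {d : ℤ_[2]} (h : 2 ^ k ∣ d)
    (h' : ¬ 2 ^ (k + 1) ∣ d) : 2 ^ (k + 1) ∣ d - 2 ^ k := by
  obtain ⟨u, rfl⟩ := h
  have hu : toZModPow 1 u ≠ toZModPow 1 0 := fun hu =>
    h' (by simpa [pow_succ] using mul_dvd_mul_left (2 ^ k) (toZModPow_eq_iff_pow_dvd.mp hu))
  have hu' : toZModPow 1 u = toZModPow 1 1 := by
    rw [map_one]
    exact (by decide : ∀ c : ZMod 2, c ≠ 0 → c = 1) _ (by rwa [map_zero] at hu)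
  rw [← mul_sub_one, pow_succ]
  exact mul_dvd_mul_left _ (by simpa using toZModPow_eq_iff_pow_dvd.mp hu')

lemma iterate_eq_add_natCast_add_two_mul_sum (hw : ∀ x, f x = x + 1 + 2 * w x) (m : ℕ)
    (x : ℤ_[2]) : f^[m] x = x + m + 2 * ∑ j ∈ Finset.range m, w (f^[j] x) := by
  induction m with
  | zero => simp
  | succ m ih =>
    rw [iterate_succ_apply', hw, Finset.sum_range_succ]
    push_cast
    linear_combination ih

lemma two_pow_succ_dvd_iterate_sub_iff (hw : ∀ x, f x = x + 1 + 2 * w x) (k : ℕ)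
    (x : ℤ_[2]) :
    2 ^ (k + 1) ∣ f^[2 ^ k] x - (x + 2 ^ k) ↔
      2 ^ k ∣ ∑ j ∈ Finset.range (2 ^ k), w (f^[j] x) := by
  have hsum : f^[2 ^ k] x - (x + 2 ^ k) = 2 * ∑ j ∈ Finset.range (2 ^ k), w (f^[j] x) := by
    rw [iterate_eq_add_natCast_add_two_mul_sum hw]
    push_cast
    ring
  rw [hsum, pow_succ', mul_dvd_mul_iff_left two_ne_zero]

lemma IsCompatible.of_eq_add_one_add_two_mul (hw : IsCompatible w)
    (hf : ∀ x, f x = x + 1 + 2 * w x) : IsCompatible f :=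
  isCompatible_iff_pow_dvd.mpr fun k x y hxy => by
    rw [hf, hf, show x + 1 + 2 * w x - (y + 1 + 2 * w y) = (x - y) + 2 * (w x - w y) by ring]
    exact dvd_add hxy (dvd_mul_of_dvd_right (hw.pow_dvd_sub hxy) _)

lemma exists_two_pow_succ_dvd_iterate_sub {k : ℕ} (h : TransitiveMod f k)
    (horbit : ∀ y, 2 ^ (k + 1) ∣ f^[2 ^ k] y - (y + 2 ^ k)) (x a : ℤ_[2]) :
    ∃ m, 2 ^ (k + 1) ∣ f^[m] x - a := by
  obtain ⟨j, hj⟩ := h.exists_pow_dvd_iterate_sub x a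
  by_cases hja : 2 ^ (k + 1) ∣ f^[j] x - a
  · exact ⟨j, hja⟩
  -- `f^[j] x ≡ a + 2^k (mod 2^(k+1))`, and `2^k` more steps add `2^k` again
  refine ⟨2 ^ k + j, ?_⟩
  have hstep := two_pow_succ_dvd_sub_two_pow (dvd_sub_comm.mp hj) (mt dvd_sub_comm.mp hja)
  rw [iterate_add_apply]
  convert dvd_sub (horbit (f^[j] x)) hstep using 1
  ring

lemma transitiveMod_of_eq_add_one_add_two_mul_fwdDiff {v : ℤ_[2] → ℤ_[2]}
    (hv : IsCompatible v) (hf : ∀ x, f x = x + 1 + 2 * fwdDiff 1 v x) (k : ℕ) :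
    TransitiveMod f k := by
  induction k with
  | zero => exact transitiveMod_zero f
  | succ k ih =>
    refine transitiveMod_of_exists_pow_dvd_iterate_sub
      ((hv.fwdDiff 1).of_eq_add_one_add_two_mul hf)
      (exists_two_pow_succ_dvd_iterate_sub ih fun y => ?_)
    exact (two_pow_succ_dvd_iterate_sub_iff hf k y).mpr
      (ih.pow_dvd_sum_range_fwdDiff_iterate hv y)

lemma TransitiveMod.two_pow_succ_dvd_iterate_two_pow_sub {k : ℕ} (hk : TransitiveMod f k)
    (hk' : TransitiveMod f (k + 1)) (x : ℤ_[2]) :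
    2 ^ (k + 1) ∣ f^[2 ^ k] x - (x + 2 ^ k) := by
  rw [← sub_sub]
  exact two_pow_succ_dvd_sub_two_pow (hk.pow_dvd_iterate_pow_sub x)
    (hk'.not_pow_dvd_iterate_sub (by positivity) (Nat.pow_lt_pow_succ one_lt_two) x)

lemma exists_eq_add_one_add_two_mul (h₀ : TransitiveMod f 0) (h₁ : TransitiveMod f 1) :
    ∃ w : ℤ_[2] → ℤ_[2], ∀ x, f x = x + 1 + 2 * w x := by
  choose w hw using h₀.two_pow_succ_dvd_iterate_two_pow_sub h₁
  exact ⟨w, fun x => by linear_combination (by simpa using hw x : f x - (x + 1) = 2 * w x)⟩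

lemma isCompatible_of_transitiveMod_of_eq_add_one_add_two_mul (hf : IsCompatible f)
    (htr : ∀ k, TransitiveMod f k) (hw : ∀ x, f x = x + 1 + 2 * w x) : IsCompatible w := by
  refine isCompatible_iff_pow_dvd.mpr fun k x y hxy => ?_
  have key : 2 ^ (k + 1) ∣ (f x - f y) - (x - y) := by
    by_cases hxy' : 2 ^ (k + 1) ∣ x - y
    · exact dvd_sub (hf.pow_dvd_sub hxy') hxy'
    have hfxy : ¬ 2 ^ (k + 1) ∣ f x - f y := fun h =>
      hxy' ((htr (k + 1)).pow_dvd_sub_of_pow_dvd_apply_sub h)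
    simpa using dvd_sub (two_pow_succ_dvd_sub_two_pow (hf.pow_dvd_sub hxy) hfxy)
      (two_pow_succ_dvd_sub_two_pow hxy hxy')
  rwa [hw, hw, show x + 1 + 2 * w x - (y + 1 + 2 * w y) - (x - y) = 2 * (w x - w y) by ring,
    pow_succ', mul_dvd_mul_iff_left two_ne_zero] at key

lemma two_pow_dvd_sum_range_natCast_add (htr : ∀ k, TransitiveMod f k)
    (hw : ∀ x, f x = x + 1 + 2 * w x) (hwc : IsCompatible w) (k n : ℕ) :
    2 ^ k ∣ ∑ j ∈ Finset.range (2 ^ k), w ((n + j : ℕ) : ℤ_[2]) := by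
  have hres := hwc.pow_dvd_sum_range_sub_sum_range (s := fun j => ((n + j : ℕ) : ℤ_[2]))
    (t := fun j => f^[j] 0) (bijective_toZModPow_natCast_add k n)
    ((htr k).bijective_toZModPow_iterate 0)
  have horbit := (two_pow_succ_dvd_iterate_sub_iff hw k 0).mp
    ((htr k).two_pow_succ_dvd_iterate_two_pow_sub (htr (k + 1)) 0)
  simpa using dvd_add hres horbit

end TwoAdic

theorem stmt4 (f : ℤ_[2] → ℤ_[2]) :
    (IsCompatible f ∧ ∀ k : ℕ, 1 ≤ k → TransitiveMod f k) ↔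
      ∃ v : ℤ_[2] → ℤ_[2], IsCompatible v ∧
        ∀ x : ℤ_[2], f x = 1 + x + 2 * (v (x + 1) - v x) := by
  constructor
  · rintro ⟨hf, htr⟩
    have htr' (k : ℕ) : TransitiveMod f k := by
      rcases k.eq_zero_or_pos with rfl | hk
      exacts [transitiveMod_zero f, htr k hk]
    obtain ⟨w, hw⟩ := exists_eq_add_one_add_two_mul (htr' 0) (htr' 1)
    have hwc := isCompatible_of_transitiveMod_of_eq_add_one_add_two_mul hf htr' hw
    obtain ⟨v, hv, rfl⟩ :=
      exists_isCompatible_fwdDiff_eq hwc (two_pow_dvd_sum_range_natCast_add htr' hw hwc)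
    exact ⟨v, hv, fun x => by rw [hw, fwdDiff]; ring⟩
  · rintro ⟨v, hv, hf⟩
    have hf' (x : ℤ_[2]) : f x = x + 1 + 2 * fwdDiff 1 v x := by rw [hf, fwdDiff]; ring
    exact ⟨(hv.fwdDiff 1).of_eq_add_one_add_two_mul hf',
      fun k _ => transitiveMod_of_eq_add_one_add_two_mul_fwdDiff hv hf' k⟩
end

section
/- Let f : ℤ_p → ℤ_p be a polynomial with p-adic integer coefficients in one variable. Then f preserves the Haar measure on ℤ_p if and only if f is bijective modulo p and the derivative f'(u) is nonzero modulo p for all u ∈ {0, 1, ..., p-1}. -/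
/-- `f` is bijective modulo `p^k`: it induces a bijection of `ZMod (p^k)`. -/
def BijectiveMod {p : ℕ} [Fact p.Prime] (f : ℤ_[p] → ℤ_[p]) (k : ℕ) : Prop :=
  ∃ g : ZMod (p ^ k) → ZMod (p ^ k),
    (∀ x : ℤ_[p], g (PadicInt.toZModPow k x) = PadicInt.toZModPow k (f x)) ∧
    Function.Bijective g

/-!
If `p ∣ f'(u)` then `f(u + p) ≡ f(u) mod p²` although `u + p ≢ u mod p²`, so `f` is not injective
mod `p²`. Conversely, if `f'` is a unit everywhere, Hensel's lemma lifts every solution of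
`f(x) ≡ y mod p` to an exact solution of `f(x) = y`; hence `f` is onto `ℤ_[p]`, and so onto every
`ZMod (p ^ k)`, where surjective means bijective.
-/

open Polynomial

theorem Polynomial.sq_dvd_eval_add_sub_eval {R : Type*} [CommRing R] (f : R[X]) {x h : R}
    (hf : h ∣ f.derivative.eval x) : h ^ 2 ∣ f.eval (x + h) - f.eval x := by
  obtain ⟨c, hc⟩ := hf
  obtain ⟨d, hd⟩ := f.binomExpansion x h
  exact ⟨c + d, by rw [hd, hc]; ring⟩

namespace PadicInt

variable {p : ℕ} [Fact p.Prime]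

theorem toZModPow_eq_iff_dvd_sub {k : ℕ} {x y : ℤ_[p]} :
    toZModPow k x = toZModPow k y ↔ (p : ℤ_[p]) ^ k ∣ x - y := by
  rw [← sub_eq_zero, ← map_sub, ← RingHom.mem_ker, ker_toZModPow, Ideal.mem_span_singleton]

theorem not_sq_p_dvd_p : ¬ (p : ℤ_[p]) ^ 2 ∣ p := by
  simpa using (pow_dvd_pow_iff (n := 2) (m := 1) prime_p.ne_zero prime_p.not_isUnit).not.mpr
    (by norm_num)

theorem surjective_eval_of_forall_exists_dvd {f : ℤ_[p][X]}
    (hd : ∀ u, ¬ (p : ℤ_[p]) ∣ f.derivative.eval u)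
    (hf : ∀ y, ∃ x, (p : ℤ_[p]) ∣ f.eval x - y) : Function.Surjective fun x => f.eval x := by
  intro y
  obtain ⟨a, ha⟩ := hf y
  have hderiv : ‖f.derivative.eval a‖ = 1 :=
    le_antisymm (norm_le_one _) (not_lt.mp fun h => hd a ((norm_lt_one_iff_dvd _).mp h))
  have hnorm : ‖(f - C y).aeval a‖ < ‖(f - C y).derivative.aeval a‖ ^ 2 := by
    simpa [hderiv] using (norm_lt_one_iff_dvd _).mpr ha
  obtain ⟨z, hz, -⟩ := hensels_lemma hnorm
  exact ⟨z, by simpa [sub_eq_zero] using hz⟩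

end PadicInt

open PadicInt

section

variable {p : ℕ} [Fact p.Prime]

theorem BijectiveMod.exists_dvd_sub {f : ℤ_[p] → ℤ_[p]} {k : ℕ} (hf : BijectiveMod f k)
    (y : ℤ_[p]) : ∃ x, (p : ℤ_[p]) ^ k ∣ f x - y := by
  obtain ⟨g, hg, hbij⟩ := hf
  obtain ⟨z, hz⟩ := hbij.2 (toZModPow k y)
  obtain ⟨x, rfl⟩ := ZMod.ringHom_surjective (toZModPow k) z
  exact ⟨x, toZModPow_eq_iff_dvd_sub.mp (hg x ▸ hz)⟩

theorem bijectiveMod_eval_of_surjective {f : ℤ_[p][X]}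
    (hf : Function.Surjective fun x => f.eval x) (k : ℕ) : BijectiveMod (fun x => f.eval x) k := by
  have : NeZero (p ^ k) := ⟨pow_ne_zero k (Fact.out : p.Prime).ne_zero⟩
  refine ⟨fun z => (f.map (toZModPow k)).eval z, fun x => by simp [eval_map], ?_⟩
  rw [← Finite.surjective_iff_bijective]
  intro z
  obtain ⟨y, rfl⟩ := ZMod.ringHom_surjective (toZModPow k) z
  obtain ⟨x, rfl⟩ := hf y
  exact ⟨toZModPow k x, by simp [eval_map]⟩

theorem BijectiveMod.not_dvd_derivative_eval {f : ℤ_[p][X]}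
    (hf : BijectiveMod (fun x => f.eval x) 2) (u : ℤ_[p]) : ¬ (p : ℤ_[p]) ∣ f.derivative.eval u := by
  intro hu
  obtain ⟨g, hg, hinj, -⟩ := hf
  have : toZModPow 2 (u + (p : ℤ_[p])) = toZModPow 2 u := hinj <| by
    rw [hg, hg, toZModPow_eq_iff_dvd_sub]
    exact f.sq_dvd_eval_add_sub_eval hu
  exact not_sq_p_dvd_p (by simpa using toZModPow_eq_iff_dvd_sub.mp this)

end

theorem stmt10 {p : ℕ} [Fact p.Prime] (f : Polynomial ℤ_[p]) :
    (∀ k : ℕ, 1 ≤ k → BijectiveMod (fun x => f.eval x) k) ↔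
      (BijectiveMod (fun x => f.eval x) 1 ∧
        ∀ u : ℤ_[p], ¬ (p : ℤ_[p]) ∣ f.derivative.eval u) := by
  refine ⟨fun h => ⟨h 1 le_rfl, (h 2 one_le_two).not_dvd_derivative_eval⟩, ?_⟩
  rintro ⟨h1, hd⟩ k -
  refine bijectiveMod_eval_of_surjective (surjective_eval_of_forall_exists_dvd hd ?_) k
  simpa using h1.exists_dvd_sub
end

section
/- Let p be a prime and f ∈ ℚ_p[x] an integer-valued polynomial (mapping ℤ_p into ℤ_p) of degree d > 1 that is 1-Lipschitz on ℤ_p and ergodic (transitive modulo p^k for all k ≥ 1). Then there exist no constants c, c_0, ..., c_r ∈ ℤ_p, not all zero modulo p, such that c + Σ_{i=0}^{r} c_i · f^{(n+i)}(x_0) ≡ 0 (mod p^k) for all n ≥ 0 and all k ≥ 1, where f^{(m)} denotes the m-fold iterate of f. -/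
/-!
A relation `c + ∑ cᵢ F^[n+i] x₀ ≡ 0 (mod p^k)` holding for every `k` is an identity on the orbit
of `x₀`. Reduction mod `p^k` intertwines `F` with a single cycle of `ZMod (p^k)`, so the orbit meets
every residue class and the iterates of `F` respect congruences; hence `c + ∑ cᵢ F^[i] z = 0` for
every `z ∈ ℤ_p`. The polynomial `c + ∑ cᵢ f^{∘i}` then vanishes on the infinite set `ℤ_p` and is
zero, while `1, X, f, f ∘ f, …` have the pairwise distinct degrees `0, 1, d, d², …` and are
therefore linearly independent, so all coefficients vanish.
-/

open Polynomial

theorem Polynomial.linearIndependent_of_natDegree_injective {R ι : Type*} [CommRing R]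
    [IsDomain R] {g : ι → R[X]} (hg0 : ∀ i, g i ≠ 0) (hg : Function.Injective (natDegree ∘ g)) :
    LinearIndependent R g := by
  classical
  refine linearIndependent_iff'.mpr fun s a hsum i hi => by_contra fun hai => ?_
  have hdeg : ∀ j, a j • g j ≠ 0 → (a j • g j).degree = (g j).natDegree := fun j hj => by
    rw [degree_eq_natDegree hj, natDegree_smul _ (left_ne_zero_of_smul hj)]
  have hsup := degree_sum_eq_of_disjoint (fun j => a j • g j) s
    fun j hj j' hj' hne => by
      simp only [Function.onFun, Function.comp_apply, hdeg j hj.2, hdeg j' hj'.2, ne_eq,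
        Nat.cast_inj]
      exact hg.ne hne
  rw [hsum, degree_zero, eq_comm, Finset.sup_eq_bot_iff] at hsup
  exact smul_ne_zero hai (hg0 i) (degree_eq_bot.mp (hsup i hi))

theorem Polynomial.linearIndependent_one_iterate_comp_X {R : Type*} [CommRing R] [IsDomain R]
    {f : R[X]} (hf : 1 < f.natDegree) :
    LinearIndependent R fun o : Option ℕ => o.elim 1 fun n => f.comp^[n] X := by
  have hpow : ∀ n, 0 < f.natDegree ^ n := fun n => Nat.pow_pos (by omega)
  refine linearIndependent_of_natDegree_injective ?_ ?_
  · rintro (_ | n)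
    · exact one_ne_zero
    · refine ne_zero_of_natDegree_gt (n := 0) ?_
      simpa using hpow n
  · rintro (_ | m) (_ | n) h <;> simp only [Function.comp_apply, Option.elim, natDegree_one,
      natDegree_iterate_comp, natDegree_X, mul_one] at h
    · rfl
    · exact absurd h.symm (hpow n).ne'
    · exact absurd h (hpow m).ne'
    · rw [Nat.pow_right_injective hf h]

namespace PadicInt

variable {p : ℕ} [Fact p.Prime]

theorem toZModPow_eq_zero_iff {k : ℕ} {x : ℤ_[p]} : toZModPow k x = 0 ↔ (p : ℤ_[p]) ^ k ∣ x := by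
  rw [← RingHom.mem_ker, ker_toZModPow, Ideal.mem_span_singleton]

theorem eq_zero_of_forall_eval_eq_zero {P : ℚ_[p][X]} (h : ∀ z : ℤ_[p], P.eval (z : ℚ_[p]) = 0) :
    P = 0 := by
  refine P.eq_zero_of_infinite_isRoot <|
    Set.infinite_of_injective_forall_mem (f := ((↑) : ℕ → ℚ_[p])) Nat.cast_injective fun n => ?_
  simpa using h n

theorem coe_iterate_eq_eval_iterate_comp {f : ℚ_[p][X]} {F : ℤ_[p] → ℤ_[p]}
    (hF : ∀ z : ℤ_[p], (F z : ℚ_[p]) = f.eval (z : ℚ_[p])) (n : ℕ) (z : ℤ_[p]) :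
    (F^[n] z : ℚ_[p]) = (f.comp^[n] X).eval (z : ℚ_[p]) := by
  rw [iterate_comp_eval, eval_X]
  exact Function.Semiconj.iterate_right (f := Subtype.val) (gb := fun x => f.eval x) hF n z

end PadicInt

namespace TransitiveMod

open PadicInt

variable {p : ℕ} [Fact p.Prime] {F : ℤ_[p] → ℤ_[p]} {k : ℕ}

theorem toZModPow_iterate_eq (hF : TransitiveMod F k) {x y : ℤ_[p]}
    (h : toZModPow k x = toZModPow k y) (n : ℕ) :
    toZModPow k (F^[n] x) = toZModPow k (F^[n] y) := by
  obtain ⟨g, hg, -⟩ := hF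
  have hsemi : Function.Semiconj (toZModPow k) F g := fun x => (hg x).symm
  rw [hsemi.iterate_right, hsemi.iterate_right, h]

theorem exists_toZModPow_iterate_eq (hF : TransitiveMod F k) (x z : ℤ_[p]) :
    ∃ n, toZModPow k (F^[n] x) = toZModPow k z := by
  obtain ⟨g, hg, hcycle⟩ := hF
  have hsemi : Function.Semiconj (toZModPow k) F g := fun x => (hg x).symm
  obtain ⟨n, hn⟩ := hcycle (toZModPow k x) (toZModPow k z)
  exact ⟨n, by rw [hsemi.iterate_right, hn]⟩

end TransitiveMod

open PadicInt in
theorem eq_zero_of_pow_dvd_along_orbit {p : ℕ} [Fact p.Prime] {ι : Type*} [Fintype ι]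
    {F : ℤ_[p] → ℤ_[p]} (herg : ∀ k : ℕ, 1 ≤ k → TransitiveMod F k) (e : ι → ℕ)
    (c : ℤ_[p]) (cs : ι → ℤ_[p]) {x₀ : ℤ_[p]}
    (h : ∀ n k : ℕ, (p : ℤ_[p]) ^ k ∣ c + ∑ i, cs i * F^[n + e i] x₀) (z : ℤ_[p]) :
    c + ∑ i, cs i * F^[e i] z = 0 := by
  refine ext_of_toZModPow.mp fun k => ?_
  rcases Nat.eq_zero_or_pos k with rfl | hk
  · exact Subsingleton.elim (α := ZMod 1) _ _
  obtain ⟨n, hn⟩ := (herg k hk).exists_toZModPow_iterate_eq x₀ z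
  have horbit : ∀ i, toZModPow k (F^[n + e i] x₀) = toZModPow k (F^[e i] z) := fun i => by
    rw [add_comm, Function.iterate_add_apply, (herg k hk).toZModPow_iterate_eq hn]
  simpa [horbit] using toZModPow_eq_zero_iff.mpr (h n k)

theorem stmt18_general {p : ℕ} [Fact p.Prime] (f : Polynomial ℚ_[p]) (F : ℤ_[p] → ℤ_[p])
    (hF : ∀ z : ℤ_[p], (F z : ℚ_[p]) = f.eval (z : ℚ_[p]))
    (hdeg : 1 < f.natDegree)
    (herg : ∀ k : ℕ, 1 ≤ k → TransitiveMod F k) (x₀ : ℤ_[p]) :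
    ¬ ∃ (r : ℕ) (c : ℤ_[p]) (cs : Fin (r + 1) → ℤ_[p]),
      (¬ (p : ℤ_[p]) ∣ c ∨ ∃ i, ¬ (p : ℤ_[p]) ∣ cs i) ∧
      ∀ (n k : ℕ),
        (p : ℤ_[p]) ^ k ∣ c + ∑ i : Fin (r + 1), cs i * F^[n + (i : ℕ)] x₀ := by
  rintro ⟨r, c, cs, hnonzero, hdiv⟩
  have hrel := eq_zero_of_pow_dvd_along_orbit herg (fun i : Fin (r + 1) => (i : ℕ)) c cs hdiv
  set a : Option (Fin (r + 1)) → ℚ_[p] := fun o => o.elim c fun i => cs i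
  have hP : ∑ o, a o • (o.map Fin.val).elim 1 (fun n => f.comp^[n] X) = 0 := by
    refine PadicInt.eq_zero_of_forall_eval_eq_zero fun z => ?_
    have := congrArg ((↑) : ℤ_[p] → ℚ_[p]) (hrel z)
    push_cast [PadicInt.coe_sum, PadicInt.coe_iterate_eq_eval_iterate_comp hF] at this
    simpa [a, Fintype.sum_option, eval_finsetSum] using this
  have hzero := Fintype.linearIndependent_iff.mp ((linearIndependent_one_iterate_comp_X hdeg).comp
    _ (Option.map_injective Fin.val_injective)) a hP
  rcases hnonzero with hc | ⟨i, hi⟩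
  · exact hc ((show c = 0 by simpa [a] using hzero none) ▸ dvd_zero _)
  · exact hi ((show cs i = 0 by simpa [a] using hzero (some i)) ▸ dvd_zero _)

theorem stmt18 {p : ℕ} [Fact p.Prime] (f : Polynomial ℚ_[p]) (F : ℤ_[p] → ℤ_[p])
    (hF : ∀ z : ℤ_[p], (F z : ℚ_[p]) = f.eval (z : ℚ_[p]))
    (hdeg : 1 < f.natDegree) (hcomp : IsCompatible F)
    (herg : ∀ k : ℕ, 1 ≤ k → TransitiveMod F k) (x₀ : ℤ_[p]) :
    ¬ ∃ (r : ℕ) (c : ℤ_[p]) (cs : Fin (r + 1) → ℤ_[p]),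
      (¬ (p : ℤ_[p]) ∣ c ∨ ∃ i, ¬ (p : ℤ_[p]) ∣ cs i) ∧
      ∀ (n k : ℕ),
        (p : ℤ_[p]) ^ k ∣ c + ∑ i : Fin (r + 1), cs i * F^[n + (i : ℕ)] x₀ :=
  stmt18_general f F hF hdeg herg x₀
end

section
/- For p = 2, the function f : ℤ_2 → ℤ_2 defined by f(x) = 1 + x + 4·(−1)^{1+x} (where (−1)^x denotes the 2-adically continuous extension, equal to Σ_{j≥0} (−2)^j·C(x,j)) is compatible and ergodic (transitive modulo 2^k for all k), and the orbit sequence x_{n+1} = f(x_n) satisfies the linear relation x_{n+2} = x_n + 2 for all n ≥ 0. -/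
/-!
Since `E` is continuous and `ℕ` is dense in `ℤ₂`, the identities `E (x + 1) = -E x` and
`E (x + 2z) = E x` pass from `ℕ` to all of `ℤ₂`. So `E (1 + x)` depends only on the parity of `x`,
which makes `f` a translation on each residue class mod 2 and gives `f (f x) = x + 2`. Modulo `2^k`
the induced map therefore sweeps the class of `a` mod 2 in steps of two, and since `f a - a` is odd,
the same orbit also sweeps the other class.
-/

open PadicInt

namespace PadicInt

variable {p : ℕ} [Fact p.Prime]

theorem toZModPow_eq_iff_norm_sub_le (k : ℕ) (x y : ℤ_[p]) :
    toZModPow k x = toZModPow k y ↔ ‖x - y‖ ≤ (p : ℝ) ^ (-(k : ℤ)) := by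
  rw [norm_le_pow_iff_mem_span_pow, ← ker_toZModPow, RingHom.mem_ker, map_sub, sub_eq_zero]

theorem isCompatible_of_forall_dvd {f : ℤ_[p] → ℤ_[p]}
    (hf : ∀ x y : ℤ_[p], (p : ℤ_[p]) ∣ x - y → f x - f y = x - y) : IsCompatible f := by
  intro x y
  by_cases h : (p : ℤ_[p]) ∣ x - y
  · rw [hf x y h]
  · have hxy : ‖x - y‖ = 1 :=
      (norm_le_one _).antisymm (not_lt.1 (mt (norm_lt_one_iff_dvd _).1 h))
    exact hxy ▸ norm_le_one _

theorem IsCompatible.exists_semiconj_toZModPow {f : ℤ_[p] → ℤ_[p]} (hf : IsCompatible f)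
    (k : ℕ) : ∃ g : ZMod (p ^ k) → ZMod (p ^ k), Function.Semiconj (toZModPow k) f g := by
  have hsurj := ZMod.ringHom_surjective (toZModPow (p := p) k)
  refine ⟨fun a => toZModPow k (f (Function.surjInv hsurj a)), fun x => ?_⟩
  rw [toZModPow_eq_iff_norm_sub_le]
  refine (hf x _).trans ?_
  rw [← toZModPow_eq_iff_norm_sub_le, Function.surjInv_eq hsurj]

end PadicInt

theorem ZMod.exists_iterate_eq_of_apply_apply_eq_add_two {n : ℕ} [NeZero n]
    {g : ZMod n → ZMod n} (hg : ∀ y, g (g y) = y + 2) (hodd : ∀ a, ∃ w, g a = a + 2 * w + 1)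
    (a b : ZMod n) : ∃ m : ℕ, g^[m] a = b := by
  have hg2 : ∀ y, g^[2] y = y + 2 := hg
  have hstep : ∀ (m : ℕ) y, g^[2 * m] y = y + 2 * m := by
    intro m
    induction m with
    | zero => simp
    | succ m ih =>
      intro y
      rw [mul_add_one, Function.iterate_add_apply, hg2, ih]
      push_cast
      ring
  have hb : b = a + ((b - a).val : ZMod n) := by rw [ZMod.natCast_zmod_val]; ring
  rcases Nat.even_or_odd' (b - a).val with ⟨m, hm | hm⟩
  · exact ⟨2 * m, by rw [hstep, hb, hm]; push_cast; ring⟩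
  · obtain ⟨w, hw⟩ := hodd a
    refine ⟨2 * (m - w : ZMod n).val + 1, ?_⟩
    rw [Function.iterate_add_apply, Function.iterate_one, hstep, hw, ZMod.natCast_zmod_val,
      hb, hm]
    push_cast
    ring

theorem transitiveMod_of_apply_apply_eq_add_two {f : ℤ_[2] → ℤ_[2]} (hf : IsCompatible f)
    (hf2 : ∀ x, f (f x) = x + 2) (hodd : ∀ x, ∃ w, f x = x + 2 * w + 1) (k : ℕ) :
    TransitiveMod f k := by
  obtain ⟨g, hg⟩ := hf.exists_semiconj_toZModPow k
  have hsurj := ZMod.ringHom_surjective (toZModPow (p := 2) k)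
  refine ⟨g, fun x => (hg x).symm, ZMod.exists_iterate_eq_of_apply_apply_eq_add_two ?_ ?_⟩
  · intro y
    obtain ⟨x, rfl⟩ := hsurj y
    rw [← hg, ← hg, hf2, map_add, map_ofNat]
  · intro a
    obtain ⟨x, rfl⟩ := hsurj a
    obtain ⟨w, hw⟩ := hodd x
    exact ⟨toZModPow k w, by rw [← hg, hw]; simp only [map_add, map_mul, map_ofNat, map_one]⟩

section ParitySign

variable {E : ℤ_[2] → ℤ_[2]} (hE : Continuous E) (hEn : ∀ n : ℕ, E n = (-1) ^ n)
include hE hEn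

theorem apply_add_one_eq_neg (x : ℤ_[2]) : E (x + 1) = -E x := by
  refine congrFun (denseRange_natCast.equalizer (hE.comp (continuous_add_const 1)) hE.neg
    (funext fun n => ?_)) x
  simp only [Function.comp_apply, Pi.neg_apply]
  rw [← Nat.cast_add_one, hEn, hEn, pow_succ, mul_neg_one]

theorem apply_add_two_mul (x z : ℤ_[2]) : E (x + 2 * z) = E x := by
  have hnat : ∀ m : ℕ, E (x + 2 * m) = E x := by
    intro m
    induction m with
    | zero => simp
    | succ m ih =>
      rw [Nat.cast_add_one, show x + 2 * ((m : ℤ_[2]) + 1) = x + 2 * m + 1 + 1 by ring,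
        apply_add_one_eq_neg hE hEn, apply_add_one_eq_neg hE hEn, neg_neg, ih]
  exact congrFun (denseRange_natCast.equalizer (g := fun z => E (x + 2 * z))
    (hE.comp (by fun_prop)) continuous_const (funext hnat)) z

theorem apply_eq_of_two_dvd_sub {x y : ℤ_[2]} (h : (2 : ℤ_[2]) ∣ x - y) : E x = E y := by
  obtain ⟨z, hz⟩ := h
  rw [eq_add_of_sub_eq' hz, apply_add_two_mul hE hEn]

variable {f : ℤ_[2] → ℤ_[2]} (hf : ∀ x, f x = 1 + x + 4 * E (1 + x))
include hf

theorem isCompatible_of_eq_one_add_add_four_mul : IsCompatible f :=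
  isCompatible_of_forall_dvd fun x y h => by
    rw [hf, hf, apply_eq_of_two_dvd_sub hE hEn (x := 1 + x) (y := 1 + y) (by simpa using h)]
    ring

theorem apply_apply_of_eq_one_add_add_four_mul (x : ℤ_[2]) : f (f x) = x + 2 := by
  have hpar : E (1 + f x) = E (1 + x + 1) :=
    apply_eq_of_two_dvd_sub hE hEn ⟨2 * E (1 + x), by rw [hf]; ring⟩
  rw [hf (f x), hpar, apply_add_one_eq_neg hE hEn, hf]
  ring

end ParitySign

theorem stmt19 (E : ℤ_[2] → ℤ_[2]) (hE : Continuous E)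
    (hEn : ∀ n : ℕ, E n = (-1) ^ n) :
    letI f : ℤ_[2] → ℤ_[2] := fun x => 1 + x + 4 * E (1 + x)
    IsCompatible f ∧ (∀ k : ℕ, 1 ≤ k → TransitiveMod f k) ∧
      ∀ (x₀ : ℤ_[2]) (n : ℕ), f^[n + 2] x₀ = f^[n] x₀ + 2 := by
  set f : ℤ_[2] → ℤ_[2] := fun x => 1 + x + 4 * E (1 + x)
  have hf : ∀ x, f x = 1 + x + 4 * E (1 + x) := fun _ => rfl
  have hf2 := apply_apply_of_eq_one_add_add_four_mul hE hEn hf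
  have hcompat := isCompatible_of_eq_one_add_add_four_mul hE hEn hf
  refine ⟨hcompat, fun k _ => transitiveMod_of_apply_apply_eq_add_two hcompat hf2
    (fun x => ⟨2 * E (1 + x), by rw [hf]; ring⟩) k, fun x₀ n => ?_⟩
  rw [Function.iterate_succ_apply', Function.iterate_succ_apply', hf2]
end
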